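/- Let q be a prime power and let u, v be real exponents with 1 < u ≤ 2, 1 ≤ v < ∞ and (u − 1) v ≥ u (i.e. v ≥ u/(u − 1)). Then for every F : H_1(F_q) → ℂ one has ‖M_{H1} F‖_{ℓ^v(P^1(F_q))} ≤ √2 · q^{1 − 1/u} · ‖F‖_{ℓ^u(H_1(F_q))}. -/

import Mathlib

/-!
`K` plays the role of the finite field `F_q` with `q = Fintype.card K` elements
(the cardinality of a finite field is automatically a prime power).
The Heisenberg group `H₁(F_q)` is identified with `K × K × K`.
The projective line `P¹(F_q)` is identified with `Option K`, where `some m`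
corresponds to the direction class `[1 : m]` and `none` to `[0 : 1]`
(every class has a unique such normal form).
-/

noncomputable section

open Finset

/-- Representative direction vector of a projective class. -/
def dirVec {K : Type*} [Field K] : Option K → K × K
  | some m => (1, m)
  | none => (0, 1)

/-- The point of the horizontal line through `p = (x₀, y₀, t₀)` with direction
vector `v = (a, b)` corresponding to the parameter `s`, namely
`(x₀ + s a, y₀ + s b, t₀ + s (x₀ b - y₀ a))`. -/
def hPoint {K : Type*} [Field K] (p : K × K × K) (v : K × K) (s : K) : K × K × K :=
  (p.1 + s * v.1, p.2.1 + s * v.2, p.2.2 + s * (p.1 * v.2 - p.2.1 * v.1))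

/-- Sum of `|F|` along the horizontal line through `p` with direction vector `v`. -/
def lineSumH1 {K : Type*} [Field K] [Fintype K] (Fc : K × K × K → ℂ)
    (p : K × K × K) (v : K × K) : ℝ :=
  ∑ s : K, ‖Fc (hPoint p v s)‖

/-- The horizontal Kakeya maximal function `M_{H₁} F` on `P¹(F_q) ≃ Option K`:
the maximum over all base points `p` of the sum of `|F|` along the horizontal
line through `p` in the given direction. -/
def MH1 {K : Type*} [Field K] [Fintype K] (Fc : K × K × K → ℂ) (d : Option K) : ℝ :=
  Finset.univ.sup' ⟨((0 : K), (0 : K), (0 : K)), Finset.mem_univ _⟩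
    fun p => lineSumH1 Fc p (dirVec d)

/-- `ℓ^r` norm of a complex-valued function on a finite set. -/
def lpNormC {X : Type*} [Fintype X] (r : ℝ) (g : X → ℂ) : ℝ :=
  (∑ x, ‖g x‖ ^ r) ^ (1 / r)

/-- `ℓ^r` norm of a real-valued function on a finite set. -/
def lpNormR {X : Type*} [Fintype X] (r : ℝ) (g : X → ℝ) : ℝ :=
  (∑ x, |g x| ^ r) ^ (1 / r)


/-!
Fix, for every direction, a horizontal line on which the maximum defining `M_{H₁} F` is attained.
Lines in distinct directions project to distinct lines of `F_q²`, so any two of these `q + 1`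
lines of `q` points meet at most once. For such a family the incidence form
`B(c, g) = ∑_d c_d ∑_{z ∈ L_d} g(z)` satisfies `B ≤ ‖c‖₁ ‖g‖₁` trivially and, by Córdoba's
argument (expand `‖∑_d c_d 1_{L_d}‖₂²` and count pairwise intersections),
`B ≤ √(2q) ‖c‖₂ ‖g‖₂`. Hölder's inequality over the incidences, splitting
`x = (x^u)^(1-θ) (x^(u/2))^θ` with `θ = 2 - 2/u`, interpolates these to
`B ≤ (2q)^(1-1/u) ‖c‖_u ‖g‖_u`; testing against `c = T^(u'-1)`, where `T` is the maximal
function and `u'` the conjugate exponent, bounds `‖T‖_{u'}`. Finally `‖T‖_v ≤ ‖T‖_{u'}` as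
`v ≥ u'`, and `(2q)^(1-1/u) ≤ √2 q^(1-1/u)` as `1 - 1/u ≤ 1/2`.
-/

namespace Real

theorem rpow_sum_le_sum_rpow {ι : Type*} (s : Finset ι) {a : ι → ℝ} (ha : ∀ i ∈ s, 0 ≤ a i)
    {p : ℝ} (hp0 : 0 < p) (hp1 : p ≤ 1) : (∑ i ∈ s, a i) ^ p ≤ ∑ i ∈ s, a i ^ p :=
  le_sum_of_subadditive_on_pred (· ^ p) (0 ≤ ·) (zero_rpow hp0.ne').le
    (fun _ _ hx hy => rpow_add_le_add_rpow hx hy hp0.le hp1) (fun _ _ => add_nonneg) a ha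

theorem sum_rpow_rpow_inv_le_of_le {ι : Type*} (s : Finset ι) {a : ι → ℝ}
    (ha : ∀ i ∈ s, 0 ≤ a i) {p r : ℝ} (hp : 0 < p) (hpr : p ≤ r) :
    (∑ i ∈ s, a i ^ r) ^ r⁻¹ ≤ (∑ i ∈ s, a i ^ p) ^ p⁻¹ := by
  have hr : 0 < r := hp.trans_le hpr
  have hsum : 0 ≤ ∑ i ∈ s, a i ^ r := sum_nonneg fun i hi => rpow_nonneg (ha i hi) r
  calc (∑ i ∈ s, a i ^ r) ^ r⁻¹ = ((∑ i ∈ s, a i ^ r) ^ (p / r)) ^ p⁻¹ := by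
        rw [← rpow_mul hsum]; field_simp
    _ ≤ (∑ i ∈ s, (a i ^ r) ^ (p / r)) ^ p⁻¹ := by
        gcongr
        exact rpow_sum_le_sum_rpow s (fun i hi => rpow_nonneg (ha i hi) r) (by positivity)
          ((div_le_one hr).2 hpr)
    _ = (∑ i ∈ s, a i ^ p) ^ p⁻¹ := by
        congr 1
        refine sum_congr rfl fun i hi => ?_
        rw [← rpow_mul (ha i hi)]; field_simp

theorem sum_rpow_mul_rpow_le {ι : Type*} (s : Finset ι) {a b : ι → ℝ} (ha : ∀ i ∈ s, 0 ≤ a i)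
    (hb : ∀ i ∈ s, 0 ≤ b i) {θ : ℝ} (hθ0 : 0 ≤ θ) (hθ1 : θ ≤ 1) :
    ∑ i ∈ s, a i ^ (1 - θ) * b i ^ θ ≤ (∑ i ∈ s, a i) ^ (1 - θ) * (∑ i ∈ s, b i) ^ θ := by
  rcases hθ0.eq_or_lt with rfl | hθ0
  · simp
  rcases hθ1.eq_or_lt with rfl | hθ1
  · simp
  convert inner_le_Lp_mul_Lq_of_nonneg s (HolderConjugate.one_sub_inv_inv hθ0 hθ1)
    (fun i hi => rpow_nonneg (ha i hi) (1 - θ)) (fun i hi => rpow_nonneg (hb i hi) θ) using 3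
  · exact sum_congr rfl fun i hi => (rpow_rpow_inv (ha i hi) (sub_pos.2 hθ1).ne').symm
  · rw [one_div, inv_inv]
  · exact sum_congr rfl fun i hi => (rpow_rpow_inv (hb i hi) hθ0.ne').symm
  · rw [one_div, inv_inv]

theorem sum_le_of_sum_rpow_le {ι : Type*} (s : Finset ι) {x : ι → ℝ} (hx : ∀ i ∈ s, 0 ≤ x i)
    {u C M : ℝ} (hu1 : 1 ≤ u) (hu2 : u ≤ 2) (hC : 0 ≤ C) (hu : ∑ i ∈ s, x i ^ u ≤ M)
    (hhalf : ∑ i ∈ s, x i ^ (u / 2) ≤ √(C * M)) :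
    ∑ i ∈ s, x i ≤ C ^ (1 - u⁻¹) * M ^ u⁻¹ := by
  set θ : ℝ := 2 * (1 - u⁻¹)
  have hu0 : 0 < u := by linarith
  have hθ0 : 0 ≤ θ := by
    have : u⁻¹ ≤ 1 := inv_le_one_of_one_le₀ hu1
    linarith
  have hθ1 : θ ≤ 1 := by
    have : 2⁻¹ ≤ u⁻¹ := inv_anti₀ hu0 hu2
    linarith
  have hsum_u : 0 ≤ ∑ i ∈ s, x i ^ u := sum_nonneg fun i hi => rpow_nonneg (hx i hi) _
  have hsum_u2 : 0 ≤ ∑ i ∈ s, x i ^ (u / 2) := sum_nonneg fun i hi => rpow_nonneg (hx i hi) _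
  have hM : 0 ≤ M := hsum_u.trans hu
  have hexp : u * (1 - θ) + u / 2 * θ = 1 := by simp only [θ]; field_simp; ring
  calc ∑ i ∈ s, x i = ∑ i ∈ s, (x i ^ u) ^ (1 - θ) * (x i ^ (u / 2)) ^ θ := by
        refine sum_congr rfl fun i hi => ?_
        rw [← rpow_mul (hx i hi), ← rpow_mul (hx i hi),
          ← rpow_add' (hx i hi) (by rw [hexp]; norm_num), hexp, rpow_one]
    _ ≤ (∑ i ∈ s, x i ^ u) ^ (1 - θ) * (∑ i ∈ s, x i ^ (u / 2)) ^ θ :=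
        sum_rpow_mul_rpow_le s (fun i hi => rpow_nonneg (hx i hi) _)
          (fun i hi => rpow_nonneg (hx i hi) _) hθ0 hθ1
    _ ≤ M ^ (1 - θ) * √(C * M) ^ θ := by gcongr
    _ = C ^ (1 - u⁻¹) * M ^ u⁻¹ := by
        have hθhalf : 1 / 2 * θ = 1 - u⁻¹ := by ring
        have hadd : 1 - θ + (1 - u⁻¹) = u⁻¹ := by ring
        rw [sqrt_eq_rpow, ← rpow_mul (mul_nonneg hC hM), mul_rpow hC hM, hθhalf, mul_left_comm,
          ← rpow_add' hM (by rw [hadd]; positivity), hadd]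

theorem two_mul_rpow_le_sqrt_two_mul_rpow {q t : ℝ} (hq : 0 ≤ q) (ht : t ≤ 1 / 2) :
    (2 * q) ^ t ≤ √2 * q ^ t := by
  rw [mul_rpow zero_le_two hq, sqrt_eq_rpow]
  gcongr
  exact one_le_two

end Real

section IncidenceForm

variable {D Z : Type*}

theorem sum_ite_mem_mul_ite_mem [Fintype Z] [DecidableEq Z] (L : D → Finset Z) (c : D → ℝ)
    (d d' : D) :
    ∑ z, (if z ∈ L d then c d else 0) * (if z ∈ L d' then c d' else 0)
      = c d * c d' * #(L d ∩ L d') := by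
  simp only [mul_ite, ite_mul, zero_mul, mul_zero, ← ite_and, ← mem_inter]
  rw [Fintype.sum_ite_mem, sum_const, nsmul_eq_mul, mul_comm, inter_comm]

variable [Fintype D]

def incidenceForm (L : D → Finset Z) (c : D → ℝ) (g : Z → ℝ) : ℝ :=
  ∑ d, c d * ∑ z ∈ L d, g z

variable (L : D → Finset Z) {c : D → ℝ} {g : Z → ℝ}

theorem incidenceForm_eq_sum_sigma (c : D → ℝ) (g : Z → ℝ) :
    incidenceForm L c g = ∑ x ∈ univ.sigma L, c x.1 * g x.2 := by
  simp only [incidenceForm, sum_sigma, mul_sum]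

variable [Fintype Z]

theorem incidenceForm_le_sum_mul_sum (hc : ∀ d, 0 ≤ c d) (hg : ∀ z, 0 ≤ g z) :
    incidenceForm L c g ≤ (∑ d, c d) * ∑ z, g z := by
  rw [incidenceForm, sum_mul]
  exact sum_le_sum fun d _ => mul_le_mul_of_nonneg_left (sum_le_univ_sum_of_nonneg hg) (hc d)

variable [DecidableEq Z]

theorem incidenceForm_eq_sum_mul (c : D → ℝ) (g : Z → ℝ) :
    incidenceForm L c g = ∑ z, (∑ d, if z ∈ L d then c d else 0) * g z := by
  simp only [incidenceForm, sum_mul, ite_mul, zero_mul]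
  rw [sum_comm]
  simp only [Fintype.sum_ite_mem, mul_sum]

variable {n : ℕ}

theorem sum_sq_sum_ite_mem_le (hcard : ∀ d, #(L d) ≤ n)
    (hinter : ∀ d d', d ≠ d' → #(L d ∩ L d') ≤ 1) (hc : ∀ d, 0 ≤ c d) :
    ∑ z, (∑ d, if z ∈ L d then c d else 0) ^ 2 ≤ (n - 1 + Fintype.card D) * ∑ d, c d ^ 2 := by
  classical
  have hbound : ∀ d d', (#(L d ∩ L d') : ℝ) ≤ (n - 1) * (if d = d' then 1 else 0) + 1 := by
    intro d d'
    split_ifs with h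
    · subst h; simpa using (Nat.cast_le.2 (hcard d) : (#(L d) : ℝ) ≤ n)
    · simpa using (Nat.cast_le_one.2 (hinter d d' h) : (#(L d ∩ L d') : ℝ) ≤ 1)
  calc ∑ z, (∑ d, if z ∈ L d then c d else 0) ^ 2
      = ∑ d, ∑ d', c d * c d' * #(L d ∩ L d') := by
        simp only [sq, sum_mul_sum, ← sum_ite_mem_mul_ite_mem]
        rw [sum_comm]
        exact sum_congr rfl fun _ _ => sum_comm
    _ ≤ ∑ d, ∑ d', c d * c d' * ((n - 1) * (if d = d' then 1 else 0) + 1) := by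
        gcongr with d _ d' _
        · exact mul_nonneg (hc d) (hc d')
        · exact hbound d d'
    _ = (n - 1) * ∑ d, c d ^ 2 + (∑ d, c d) ^ 2 := by
        simp only [mul_ite, mul_one, mul_zero, mul_add, sum_add_distrib, sum_ite_eq, mem_univ,
          ↓reduceIte, sq, mul_sum, sum_mul]
        congr 1
        · exact sum_congr rfl fun _ _ => by ring
        · rw [sum_comm]
    _ ≤ (n - 1) * ∑ d, c d ^ 2 + Fintype.card D * ∑ d, c d ^ 2 := by
        gcongr
        exact sq_sum_le_card_mul_sum_sq
    _ = _ := by ring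

theorem incidenceForm_le_sqrt_mul_sqrt (hcard : ∀ d, #(L d) ≤ n)
    (hinter : ∀ d d', d ≠ d' → #(L d ∩ L d') ≤ 1) (hc : ∀ d, 0 ≤ c d) :
    incidenceForm L c g ≤
      √((n - 1 + Fintype.card D) * ∑ d, c d ^ 2) * √(∑ z, g z ^ 2) := by
  rw [incidenceForm_eq_sum_mul]
  refine (Real.sum_mul_le_sqrt_mul_sqrt _ _ _).trans ?_
  gcongr
  exact sum_sq_sum_ite_mem_le L hcard hinter hc

end IncidenceForm

section Interpolation

open Real

theorem sub_one_add_card_nonneg (D : Type*) [Fintype D] [Nonempty D] (n : ℕ) :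
    (0 : ℝ) ≤ n - 1 + Fintype.card D := by
  have : (1 : ℝ) ≤ Fintype.card D := by exact_mod_cast Fintype.card_pos
  linarith [n.cast_nonneg (α := ℝ)]

variable {D Z : Type*} [Fintype D] [Fintype Z] [DecidableEq Z] (L : D → Finset Z) {n : ℕ}

theorem incidenceForm_le_rpow [Nonempty D] (hcard : ∀ d, #(L d) ≤ n)
    (hinter : ∀ d d', d ≠ d' → #(L d ∩ L d') ≤ 1) {c : D → ℝ} {g : Z → ℝ}
    (hc : ∀ d, 0 ≤ c d) (hg : ∀ z, 0 ≤ g z) {u : ℝ} (hu1 : 1 ≤ u) (hu2 : u ≤ 2) :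
    incidenceForm L c g ≤ (n - 1 + Fintype.card D) ^ (1 - u⁻¹) *
      (∑ d, c d ^ u) ^ u⁻¹ * (∑ z, g z ^ u) ^ u⁻¹ := by
  have hC := sub_one_add_card_nonneg D n
  have ha : 0 ≤ ∑ d, c d ^ u := sum_nonneg fun d _ => rpow_nonneg (hc d) u
  have hb : 0 ≤ ∑ z, g z ^ u := sum_nonneg fun z _ => rpow_nonneg (hg z) u
  have hpow : ∀ r : ℝ, ∑ p ∈ univ.sigma L, (c p.1 * g p.2) ^ r =
      incidenceForm L (fun d => c d ^ r) (fun z => g z ^ r) := fun r => by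
    rw [incidenceForm_eq_sum_sigma]
    exact sum_congr rfl fun p _ => mul_rpow (hc _) (hg _)
  have hsq : ∀ {y : ℝ}, 0 ≤ y → (y ^ (u / 2)) ^ 2 = y ^ u := fun hy => by
    rw [← rpow_natCast, ← rpow_mul hy]; norm_num
  have hL2 := incidenceForm_le_sqrt_mul_sqrt L hcard hinter (g := fun z => g z ^ (u / 2))
    fun d => rpow_nonneg (hc d) (u / 2)
  simp only [hsq (hc _), hsq (hg _)] at hL2
  calc incidenceForm L c g
      ≤ (n - 1 + Fintype.card D) ^ (1 - u⁻¹) * ((∑ d, c d ^ u) * ∑ z, g z ^ u) ^ u⁻¹ := by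
        rw [incidenceForm_eq_sum_sigma]
        refine sum_le_of_sum_rpow_le _ (fun p _ => mul_nonneg (hc p.1) (hg p.2)) hu1 hu2 hC
          ((hpow u).trans_le ?_) ?_
        · exact incidenceForm_le_sum_mul_sum L (fun d => rpow_nonneg (hc d) u)
            fun z => rpow_nonneg (hg z) u
        · rwa [hpow, ← mul_assoc, sqrt_mul (mul_nonneg hC ha)]
    _ = _ := by rw [mul_rpow ha hb, mul_assoc]

theorem sum_rpow_sum_rpow_inv_le [Nonempty D] (hcard : ∀ d, #(L d) ≤ n)
    (hinter : ∀ d d', d ≠ d' → #(L d ∩ L d') ≤ 1) {f : Z → ℝ} (hf : ∀ z, 0 ≤ f z) {u w : ℝ}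
    (huw : u.HolderConjugate w) (hu2 : u ≤ 2) :
    (∑ d, (∑ z ∈ L d, f z) ^ w) ^ w⁻¹ ≤
      (n - 1 + Fintype.card D) ^ w⁻¹ * (∑ z, f z ^ u) ^ u⁻¹ := by
  set T : D → ℝ := fun d => ∑ z ∈ L d, f z
  have hT : ∀ d, 0 ≤ T d := fun d => sum_nonneg fun z _ => hf z
  set S := ∑ d, T d ^ w
  have hS : 0 ≤ S := sum_nonneg fun d _ => rpow_nonneg (hT d) w
  set K := (n - 1 + Fintype.card D : ℝ) ^ w⁻¹ * (∑ z, f z ^ u) ^ u⁻¹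
  have hK : 0 ≤ K := mul_nonneg (rpow_nonneg (sub_one_add_card_nonneg D n) _)
    (rpow_nonneg (sum_nonneg fun z _ => rpow_nonneg (hf z) u) _)
  have hSK : S ≤ K * S ^ u⁻¹ := by
    have hTw : ∀ d, T d ^ (w - 1) * T d = T d ^ w := fun d => by
      rw [← rpow_add_one' (hT d) (by linarith [huw.symm.lt]), sub_add_cancel]
    have hTwu : ∀ d, (T d ^ (w - 1)) ^ u = T d ^ w := fun d => by
      rw [← rpow_mul (hT d), huw.symm.sub_one_mul_conj]
    calc S = incidenceForm L (fun d => T d ^ (w - 1)) f := by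
          simp only [incidenceForm, hTw, S, T]
      _ ≤ _ := incidenceForm_le_rpow L hcard hinter (fun d => rpow_nonneg (hT d) _) hf
          huw.lt.le hu2
      _ = K * S ^ u⁻¹ := by
          simp only [hTwu, huw.one_sub_inv, K, S]
          ring
  rcases hS.eq_or_lt with hS0 | hSpos
  · rw [← hS0, zero_rpow (inv_ne_zero huw.symm.ne_zero)]
    exact hK
  · refine le_of_mul_le_mul_right ?_ (rpow_pos_of_pos hSpos u⁻¹)
    rwa [← rpow_add hSpos, add_comm, huw.inv_add_inv_eq_one, rpow_one]

end Interpolation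

section HorizontalLines

variable {K : Type*} [Field K]

theorem hPoint_injective (p : K × K × K) (d : Option K) :
    Function.Injective (hPoint p (dirVec d)) := by
  intro s t h
  rcases d with _ | m
  · simpa [hPoint, dirVec] using congrArg (·.2.1) h
  · simpa [hPoint, dirVec] using congrArg (·.1) h

theorem eq_of_hPoint_eq_of_hPoint_eq {d d' : Option K} (hd : d ≠ d') {p p' : K × K × K}
    {s s' t t' : K} (hs : hPoint p (dirVec d) s = hPoint p' (dirVec d') s')
    (ht : hPoint p (dirVec d) t = hPoint p' (dirVec d') t') : s = t := by
  have hx := congrArg (·.1) hs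
  have hx' := congrArg (·.1) ht
  have hy := congrArg (·.2.1) hs
  have hy' := congrArg (·.2.1) ht
  simp only [hPoint] at hx hx' hy hy'
  rcases d with _ | m <;> rcases d' with _ | m' <;> simp only [dirVec] at hx hx' hy hy'
  · exact absurd rfl hd
  · linear_combination hy - hy' + m' * (hx' - hx)
  · linear_combination hx - hx'
  · by_contra hst
    refine hd (congrArg some (mul_left_cancel₀ (sub_ne_zero.2 hst) ?_))
    linear_combination hy - hy' + m' * (hx' - hx)

variable [Fintype K] [DecidableEq K]

def hLine (p : K × K × K) (d : Option K) : Finset (K × K × K) :=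
  univ.image (hPoint p (dirVec d))

theorem card_hLine (p : K × K × K) (d : Option K) : #(hLine p d) = Fintype.card K :=
  card_image_of_injective _ (hPoint_injective p d)

theorem card_hLine_inter_hLine_le_one {d d' : Option K} (hd : d ≠ d') (p p' : K × K × K) :
    #(hLine p d ∩ hLine p' d') ≤ 1 := by
  refine card_le_one.2 fun z hz z' hz' => ?_
  simp only [hLine, mem_inter, mem_image, mem_univ, true_and] at hz hz'
  obtain ⟨⟨s, rfl⟩, s', hs'⟩ := hz
  obtain ⟨⟨t, rfl⟩, t', ht'⟩ := hz'
  rw [eq_of_hPoint_eq_of_hPoint_eq hd hs'.symm ht'.symm]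

theorem lineSumH1_eq_sum_hLine (Fc : K × K × K → ℂ) (p : K × K × K) (d : Option K) :
    lineSumH1 Fc p (dirVec d) = ∑ z ∈ hLine p d, ‖Fc z‖ := by
  rw [hLine, sum_image fun s _ t _ h => hPoint_injective p d h, lineSumH1]

end HorizontalLines

theorem exists_MH1_eq_lineSumH1 {K : Type*} [Field K] [Fintype K] (Fc : K × K × K → ℂ)
    (d : Option K) : ∃ p, MH1 Fc d = lineSumH1 Fc p (dirVec d) := by
  obtain ⟨p, -, hp⟩ := exists_mem_eq_sup' _ fun p => lineSumH1 Fc p (dirVec d)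
  exact ⟨p, hp⟩

theorem stmt_6_general {K : Type*} [Field K] [Fintype K] (u v : ℝ) (hu1 : 1 < u)
    (hu2 : u ≤ 2) (hvu : u ≤ (u - 1) * v) (Fc : K × K × K → ℂ) :
    lpNormR v (MH1 Fc) ≤
      Real.sqrt 2 * (Fintype.card K : ℝ) ^ (1 - 1 / u) * lpNormC u Fc := by
  classical
  choose P hP using exists_MH1_eq_lineSumH1 Fc
  have hMH1 : ∀ d, MH1 Fc d = ∑ z ∈ hLine (P d) d, ‖Fc z‖ := fun d =>
    (hP d).trans (lineSumH1_eq_sum_hLine Fc (P d) d)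
  have huw := Real.HolderConjugate.conjExponent hu1
  set w := u.conjExponent
  have hwv : w ≤ v := by
    show u / (u - 1) ≤ v
    rw [div_le_iff₀ (by linarith)]; linarith
  set q : ℝ := (Fintype.card K : ℝ)
  have hC : (q - 1 + Fintype.card (Option K) : ℝ) = 2 * q := by
    rw [Fintype.card_option]; push_cast; ring
  have hmain := sum_rpow_sum_rpow_inv_le (fun d => hLine (P d) d) (fun d => (card_hLine _ d).le)
    (fun d d' hd => card_hLine_inter_hLine_le_one hd _ _) (fun z => norm_nonneg (Fc z)) huw hu2
  rw [hC] at hmain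
  have hM : ∀ d, 0 ≤ MH1 Fc d := fun d => (hMH1 d).symm ▸ sum_nonneg fun z _ => norm_nonneg _
  calc lpNormR v (MH1 Fc) ≤ (∑ d, MH1 Fc d ^ w) ^ w⁻¹ := by
        simp only [lpNormR, one_div, abs_of_nonneg (hM _)]
        exact Real.sum_rpow_rpow_inv_le_of_le _ (fun d _ => hM d) huw.symm.pos hwv
    _ ≤ (2 * q) ^ (1 - 1 / u) * lpNormC u Fc := by
        simpa only [hMH1, lpNormC, one_div, huw.one_sub_inv] using hmain
    _ ≤ Real.sqrt 2 * q ^ (1 - 1 / u) * lpNormC u Fc := by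
        refine mul_le_mul_of_nonneg_right
          (Real.two_mul_rpow_le_sqrt_two_mul_rpow (Nat.cast_nonneg _) ?_)
          (Real.rpow_nonneg (sum_nonneg fun z _ => by positivity) _)
        have : 1 / 2 ≤ 1 / u := one_div_le_one_div_of_le (by linarith) hu2
        linarith

/-- For `1 < u ≤ 2`, `1 ≤ v < ∞` with `(u - 1) v ≥ u`
(i.e. `v ≥ u/(u-1)`),
`‖M_{H₁} F‖_{ℓ^v(P¹(F_q))} ≤ √2 · q^{1 - 1/u} · ‖F‖_{ℓ^u(H₁(F_q))}`. -/
theorem stmt_6 {K : Type*} [Field K] [Fintype K] (u v : ℝ) (hu1 : 1 < u)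
    (hu2 : u ≤ 2) (hv : 1 ≤ v) (hvu : u ≤ (u - 1) * v) (Fc : K × K × K → ℂ) :
    lpNormR v (MH1 Fc) ≤
      Real.sqrt 2 * (Fintype.card K : ℝ) ^ (1 - 1 / u) * lpNormC u Fc :=
  stmt_6_general u v hu1 hu2 hvu Fc
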